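/- arXiv:1506.06325 — 4 statements merged into one kernel-verified Lean document; each statement's English description precedes it below -/
import Mathlib

section
/- Let n be a positive integer and let 0 < a_1, a_2, ..., a_n ≤ 1 be real numbers. Set α = (∑_{j=1}^n a_j/(1 − log₂ a_j)) − 2·ln 2. Then for every real number μ with 0 < μ ≤ 1 − exp(−α/8), there exists a Boolean function f : {0,1}^n → {0,1} such that μ ≤ E[f(x)] ≤ (3/4)·μ + 1/4 (expectation over a uniformly random x ∈ {0,1}^n) and Inf_j[f] < a_j for every 1 ≤ j ≤ n. -/
/-- The vector `x` with the `j`-th coordinate flipped. -/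
def flipCoord (n : ℕ) (j : Fin n) (x : Fin n → Bool) : Fin n → Bool :=
  Function.update x j (!x j)

/-- The expectation `E[f(x)]` of a Boolean function (valued in {0,1})
over a uniformly random `x ∈ {0,1}^n`; this equals `Pr[f(x) = 1]`. -/
noncomputable def expectation (n : ℕ) (f : (Fin n → Bool) → Bool) : ℝ :=
  ((Finset.univ.filter fun x : Fin n → Bool => f x = true).card : ℝ) / 2 ^ n

/-- The influence `Inf_j[f] = Pr[f(x) ≠ f(x^j)]` of the `j`-th variable on `f`,
for a uniformly random `x ∈ {0,1}^n`. -/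
noncomputable def influence (n : ℕ) (f : (Fin n → Bool) → Bool) (j : Fin n) : ℝ :=
  ((Finset.univ.filter fun x : Fin n → Bool => f x ≠ f (flipCoord n j x)).card : ℝ) / 2 ^ n

/-!
The witness is a tribes function: the OR, over a family of disjoint blocks `B`, of the AND of
the variables in `B`. Its expectation is `1 - ∏ (1 - 2^{-|B|})`, and a variable of `B` has
influence at most `2^{1-|B|}`; so variable `j` may be put in any block of size at least
`k j = t j + 2`, where `2^{-(t j + 1)} < a j ≤ 2^{-t j}`.

Filling blocks of sizes `c = 2, 3, …` greedily with the variables of `k j ≤ c`, and carrying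
the fewer than `c` leftovers on to size `c + 1`, gives
`∑ 2^{-|B|} ≥ ∑ a j / (8 (1 - log₂ a j)) - ln 2 / 4 = α / 8`, so `∏ (1 - 2^{-|B|}) ≤ exp (-α / 8) ≤ 1 - μ`. Every factor is at least `3/4`, so a
minimal subfamily with product at most `1 - μ` has product at least `3/4 (1 - μ)`.
-/

open Finset

section Cube

variable {n : ℕ}

@[simp]
lemma flipCoord_apply_self (j : Fin n) (x : Fin n → Bool) : flipCoord n j x j = !x j := by
  simp [flipCoord]

lemma flipCoord_apply_of_ne {i j : Fin n} (x : Fin n → Bool) (h : i ≠ j) :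
    flipCoord n j x i = x i :=
  Function.update_of_ne h _ _

@[simp]
lemma flipCoord_flipCoord (j : Fin n) (x : Fin n → Bool) :
    flipCoord n j (flipCoord n j x) = x := by
  funext i
  rcases eq_or_ne i j with rfl | h
  · simp
  · simp [flipCoord_apply_of_ne _ h]

lemma forall_flipCoord_eq_true_iff {j : Fin n} {s : Finset (Fin n)} (hj : j ∉ s)
    (x : Fin n → Bool) : (∀ i ∈ s, flipCoord n j x i = true) ↔ ∀ i ∈ s, x i = true := by
  refine forall₂_congr fun i hi => ?_
  rw [flipCoord_apply_of_ne x (ne_of_mem_of_not_mem hi hj)]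

/-- Flipping coordinate `i` matches the two halves of an event that does not see coordinate `i`. -/
lemma card_filter_and_eq_true_mul_two (Q : (Fin n → Bool) → Prop) [DecidablePred Q]
    (i : Fin n) (hQ : ∀ x, Q (flipCoord n i x) ↔ Q x) :
    #{x | Q x ∧ x i = true} * 2 = #{x | Q x} := by
  have halves : #{x | Q x ∧ x i = true} = #{x | Q x ∧ ¬x i = true} := by
    apply card_nbij' (flipCoord n i) (flipCoord n i) <;> intro x <;> simp [hQ]
  rw [mul_two]
  nth_rw 2 [halves]
  simpa only [filter_filter] using
    card_filter_add_card_filter_not (s := filter Q univ) (fun x => x i = true)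

lemma card_filter_and_forall_eq_true_mul_pow (Q : (Fin n → Bool) → Prop) [DecidablePred Q]
    (s : Finset (Fin n)) (hQ : ∀ i ∈ s, ∀ x, Q (flipCoord n i x) ↔ Q x) :
    #{x | Q x ∧ ∀ i ∈ s, x i = true} * 2 ^ #s = #{x | Q x} := by
  induction s using Finset.induction_on with
  | empty => simp
  | @insert j s hj ih =>
    have hQ' : ∀ x, (Q (flipCoord n j x) ∧ ∀ i ∈ s, flipCoord n j x i = true) ↔
        Q x ∧ ∀ i ∈ s, x i = true := fun x => by
      rw [hQ j (mem_insert_self j s), forall_flipCoord_eq_true_iff hj]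
    rw [← ih fun i hi => hQ i (mem_insert_of_mem hi),
      ← card_filter_and_eq_true_mul_two (fun x => Q x ∧ ∀ i ∈ s, x i = true) j hQ',
      card_insert_of_notMem hj, pow_succ, mul_comm _ 2, ← mul_assoc]
    congr 3 with x
    simp only [mem_filter, mem_univ, true_and, forall_mem_insert]
    tauto

lemma card_filter_forall_eq_true_mul_pow (s : Finset (Fin n)) :
    #{x : Fin n → Bool | ∀ i ∈ s, x i = true} * 2 ^ #s = 2 ^ n := by
  simpa using card_filter_and_forall_eq_true_mul_pow (fun _ => True) s (by simp)

end Cube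

section Tribes

variable {n : ℕ}

def tribes (𝓑 : Finset (Finset (Fin n))) (x : Fin n → Bool) : Bool :=
  decide (∃ B ∈ 𝓑, ∀ i ∈ B, x i = true)

@[simp]
lemma tribes_eq_true_iff (𝓑 : Finset (Finset (Fin n))) (x : Fin n → Bool) :
    tribes 𝓑 x = true ↔ ∃ B ∈ 𝓑, ∀ i ∈ B, x i = true :=
  decide_eq_true_iff

lemma tribes_flipCoord_of_forall_notMem {𝓑 : Finset (Finset (Fin n))} {j : Fin n}
    (hj : ∀ B ∈ 𝓑, j ∉ B) (x : Fin n → Bool) :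
    tribes 𝓑 (flipCoord n j x) = tribes 𝓑 x := by
  rw [Bool.eq_iff_iff, tribes_eq_true_iff, tribes_eq_true_iff]
  exact exists_congr fun B => and_congr_right fun hB => forall_flipCoord_eq_true_iff (hj B hB) x

lemma card_tribes_eq_false (𝓑 : Finset (Finset (Fin n)))
    (h𝓑 : (𝓑 : Set (Finset (Fin n))).PairwiseDisjoint id) :
    (#{x | tribes 𝓑 x = false} : ℝ) = (∏ B ∈ 𝓑, (1 - (1 / 2 : ℝ) ^ #B)) * 2 ^ n := by
  induction 𝓑 using Finset.induction_on with
  | empty => simp [← Bool.not_eq_true]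
  | @insert B 𝓑 hB ih =>
    rw [coe_insert, Set.pairwiseDisjoint_insert_of_notMem hB] at h𝓑
    have hflip : ∀ i ∈ B, ∀ x, tribes 𝓑 (flipCoord n i x) = false ↔ tribes 𝓑 x = false :=
      fun i hi x => by
        rw [tribes_flipCoord_of_forall_notMem
          (fun C hC hiC => disjoint_left.1 (h𝓑.2 C hC) hi hiC) x]
    have hB_true := card_filter_and_forall_eq_true_mul_pow (tribes 𝓑 · = false) B hflip
    have hsplit := card_filter_add_card_filter_not (s := filter (tribes 𝓑 · = false) univ)
      (fun x => ∀ i ∈ B, x i = true)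
    simp only [filter_filter, ← Bool.not_eq_true, tribes_eq_true_iff, exists_mem_insert,
      not_or] at hsplit hB_true ih ⊢
    rw [filter_congr fun x _ => and_comm, prod_insert hB, mul_assoc, ← ih h𝓑.1]
    set A := #{x : Fin n → Bool | (¬∃ C ∈ 𝓑, ∀ i ∈ C, x i = true) ∧ ∀ i ∈ B, x i = true}
    have hhalf : (1 / 2 : ℝ) ^ #B * 2 ^ #B = 1 := by rw [← mul_pow]; norm_num
    rw [← hB_true] at hsplit ⊢
    replace hsplit := congrArg (Nat.cast : ℕ → ℝ) hsplit
    push_cast at hsplit ⊢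
    linear_combination hsplit + (A : ℝ) * hhalf

lemma expectation_tribes {𝓑 : Finset (Finset (Fin n))}
    (h𝓑 : (𝓑 : Set (Finset (Fin n))).PairwiseDisjoint id) :
    expectation n (tribes 𝓑) = 1 - ∏ B ∈ 𝓑, (1 - (1 / 2 : ℝ) ^ #B) := by
  have hsplit := card_filter_add_card_filter_not (s := (univ : Finset (Fin n → Bool)))
    (tribes 𝓑 · = true)
  simp only [Bool.not_eq_true, card_univ, Fintype.card_fun, Fintype.card_bool,
    Fintype.card_fin] at hsplit
  replace hsplit := congrArg (Nat.cast : ℕ → ℝ) hsplit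
  push_cast at hsplit
  rw [card_tribes_eq_false 𝓑 h𝓑] at hsplit
  rw [expectation, div_eq_iff (by positivity)]
  linear_combination hsplit

lemma influence_tribes_of_forall_notMem {𝓑 : Finset (Finset (Fin n))} {j : Fin n}
    (hj : ∀ B ∈ 𝓑, j ∉ B) : influence n (tribes 𝓑) j = 0 := by
  simp [influence, tribes_flipCoord_of_forall_notMem hj]

/-- Flipping `j ∈ B` can only change the value at points that are all-true on the rest of `B`. -/
lemma influence_tribes_le {𝓑 : Finset (Finset (Fin n))}
    (h𝓑 : (𝓑 : Set (Finset (Fin n))).PairwiseDisjoint id) {B : Finset (Fin n)} (hB : B ∈ 𝓑)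
    {j : Fin n} (hj : j ∈ B) : influence n (tribes 𝓑) j ≤ (1 / 2 : ℝ) ^ (#B - 1) := by
  have hsub : ({x | tribes 𝓑 x ≠ tribes 𝓑 (flipCoord n j x)} : Finset (Fin n → Bool))
      ⊆ ({x | ∀ i ∈ B.erase j, x i = true} : Finset (Fin n → Bool)) := by
    intro x
    simp only [mem_filter, mem_univ, true_and]
    contrapose!
    rintro ⟨i, hi, hxi⟩
    rw [Bool.eq_iff_iff, tribes_eq_true_iff, tribes_eq_true_iff]
    refine exists_congr fun C => and_congr_right fun hC => ?_
    by_cases hjC : j ∈ C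
    · obtain rfl : C = B := h𝓑.elim hC hB (not_disjoint_iff.2 ⟨j, hjC, hj⟩)
      have hxi' : flipCoord n j x i ≠ true := by rwa [flipCoord_apply_of_ne x (ne_of_mem_erase hi)]
      exact iff_of_false (fun h => hxi (h i (mem_of_mem_erase hi)))
        (fun h => hxi' (h i (mem_of_mem_erase hi)))
    · exact (forall_flipCoord_eq_true_iff hjC x).symm
  have hcount := card_filter_forall_eq_true_mul_pow (B.erase j)
  rw [card_erase_of_mem hj] at hcount
  have hhalf : (1 / 2 : ℝ) ^ (#B - 1) * 2 ^ (#B - 1) = 1 := by rw [← mul_pow]; norm_num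
  rw [influence, div_le_iff₀ (by positivity), ← Nat.cast_ofNat, ← Nat.cast_pow, ← hcount]
  push_cast
  rw [mul_left_comm, hhalf, mul_one]
  exact_mod_cast card_le_card hsub

end Tribes

/-- A minimal subfamily with product `≤ t` loses at most one factor `≥ c` below `t`. -/
lemma Finset.exists_subset_prod_mem_Icc {ι : Type*} [DecidableEq ι] (s : Finset ι) (v : ι → ℝ)
    {c t : ℝ} (hc₀ : 0 ≤ c) (hc₁ : c ≤ 1) (ht : t ≤ 1) (hv : ∀ i ∈ s, c ≤ v i)
    (hs : ∏ i ∈ s, v i ≤ t) : ∃ s' ⊆ s, ∏ i ∈ s', v i ∈ Set.Icc (c * t) t := by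
  obtain ⟨s', hs', hmin⟩ := exists_min_image {s' ∈ s.powerset | ∏ i ∈ s', v i ≤ t} card
    ⟨s, by simpa using hs⟩
  rw [mem_filter, mem_powerset] at hs'
  refine ⟨s', hs'.1, ?_, hs'.2⟩
  rcases s'.eq_empty_or_nonempty with rfl | ⟨i, hi⟩
  · rw [prod_empty] at hs' ⊢
    nlinarith
  have herase : t < ∏ j ∈ s'.erase i, v j := by
    by_contra! hle
    have := hmin (s'.erase i) (by simpa using ⟨(erase_subset i s').trans hs'.1, hle⟩)
    exact (card_erase_lt_of_mem hi).not_ge this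
  have hnonneg : 0 ≤ ∏ j ∈ s'.erase i, v j :=
    prod_nonneg fun j hj => hc₀.trans (hv j (hs'.1 (mem_of_mem_erase hj)))
  rw [← mul_prod_erase s' v hi]
  nlinarith [hv i (hs'.1 hi)]

lemma Finset.prod_one_sub_le_exp_neg_sum {ι : Type*} (s : Finset ι) {p : ι → ℝ}
    (hp : ∀ i ∈ s, p i ≤ 1) : ∏ i ∈ s, (1 - p i) ≤ Real.exp (-∑ i ∈ s, p i) := by
  rw [← sum_neg_distrib, Real.exp_sum]
  exact prod_le_prod (fun i hi => sub_nonneg.2 (hp i hi))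
    fun i _ => by linarith [Real.add_one_le_exp (-p i)]

-- Chosen so that `c` variables charged `blockWeight c` fill a block worth `(1/2)^c`, while the
-- charge still dominates `a / (8 (1 - log₂ a))` for `a ≤ (1/2)^(c-2)`.
noncomputable def blockWeight (c : ℕ) : ℝ := (1 / 2 : ℝ) ^ c / (2 * ((c : ℝ) - 1))

lemma blockWeight_nonneg {c : ℕ} (hc : 1 ≤ c) : 0 ≤ blockWeight c := by
  have : (1 : ℝ) ≤ c := by exact_mod_cast hc
  unfold blockWeight
  positivity

lemma blockWeight_succ_le {c : ℕ} (hc : 2 ≤ c) : blockWeight (c + 1) ≤ blockWeight c := by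
  have : (2 : ℝ) ≤ c := by exact_mod_cast hc
  unfold blockWeight
  push_cast
  exact div_le_div₀ (by positivity) (pow_le_pow_of_le_one (by norm_num) (by norm_num) (by omega))
    (by linarith) (by linarith)

lemma natCast_mul_blockWeight_le {c : ℕ} (hc : 2 ≤ c) : c * blockWeight c ≤ (1 / 2 : ℝ) ^ c := by
  have : (2 : ℝ) ≤ c := by exact_mod_cast hc
  rw [blockWeight, mul_div_assoc', div_le_iff₀ (by linarith)]
  nlinarith [pow_pos (by norm_num : (0 : ℝ) < 1 / 2) c]

/-- Up to the factor `1/4`, the weights `blockWeight (2 + m)` are the terms of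
`log 2 = ∑ (1/2)^(m+1) / (m+1)`. -/
lemma sum_range_blockWeight_le (K : ℕ) : ∑ m ∈ range K, blockWeight (2 + m) ≤ Real.log 2 / 4 := by
  have hlog : HasSum (fun m : ℕ => (1 / 2 : ℝ) ^ (m + 1) / (m + 1)) (Real.log 2) := by
    have := Real.hasSum_pow_div_log_of_abs_lt_one (x := 1 / 2) (by norm_num [abs_of_pos])
    rwa [show (1 : ℝ) - 1 / 2 = 2⁻¹ by norm_num, Real.log_inv, neg_neg] at this
  have hterm : ∀ m : ℕ, blockWeight (2 + m) = (1 / 2 : ℝ) ^ (m + 1) / (m + 1) / 4 := fun m => by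
    rw [blockWeight, show ((2 + m : ℕ) : ℝ) - 1 = m + 1 by push_cast; ring, add_comm 2 m,
      pow_add, pow_succ]
    field_simp
    ring
  simp_rw [hterm, ← sum_div]
  gcongr
  exact sum_le_hasSum _ (fun m _ => by positivity) hlog

lemma div_one_sub_logb_le_blockWeight {a : ℝ} {t : ℕ} (ha : 0 < a) (hat : a ≤ (1 / 2) ^ t) :
    a / (1 - Real.logb 2 a) ≤ 8 * blockWeight (t + 2) := by
  have hlog : Real.logb 2 a ≤ -t := by
    calc Real.logb 2 a ≤ Real.logb 2 ((1 / 2) ^ t) := Real.logb_le_logb_of_le (by norm_num) ha hat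
      _ = -t := by simp [Real.logb_pow, Real.logb_inv]
  have : (0 : ℝ) < t + 1 := by positivity
  calc a / (1 - Real.logb 2 a) ≤ (1 / 2) ^ t / (t + 1) := by
        gcongr
        linarith
    _ = 8 * blockWeight (t + 2) := by
        rw [blockWeight, show ((t + 2 : ℕ) : ℝ) - 1 = t + 1 by push_cast; ring, pow_add]
        field_simp
        ring

section Blocks

variable {α : Type*}

lemma Finset.exists_pairwiseDisjoint_subsets_card_eq [DecidableEq α] (s : Finset α) {c : ℕ}
    (hc : 0 < c) :
    ∃ 𝓒 : Finset (Finset α), (𝓒 : Set (Finset α)).PairwiseDisjoint id ∧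
      (∀ C ∈ 𝓒, C ⊆ s ∧ #C = c) ∧ #(s \ 𝓒.biUnion id) < c := by
  induction s using Finset.strongInduction with
  | H s ih =>
  by_cases hs : #s < c
  · exact ⟨∅, by simp, by simp, by simpa⟩
  obtain ⟨T, hTs, hTc⟩ := exists_subset_card_eq (not_lt.1 hs)
  obtain ⟨𝓒, h𝓒, hsub, hrest⟩ := ih (s \ T) (sdiff_ssubset hTs (card_pos.1 (hTc ▸ hc)))
  refine ⟨insert T 𝓒, ?_, ?_, ?_⟩
  · rw [coe_insert]
    exact h𝓒.insert fun C hC _ => disjoint_of_subset_right (hsub C hC).1 disjoint_sdiff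
  · intro C hC
    rcases mem_insert.1 hC with rfl | hC
    · exact ⟨hTs, hTc⟩
    · exact ⟨(hsub C hC).1.trans sdiff_subset, (hsub C hC).2⟩
  · rwa [biUnion_insert, id, sdiff_union_distrib, ← sdiff_sdiff_left']

def IsBlockFamily (k : α → ℕ) (S : Finset α) (𝓑 : Finset (Finset α)) : Prop :=
  (𝓑 : Set (Finset α)).PairwiseDisjoint id ∧ ∀ B ∈ 𝓑, B ⊆ S ∧ 2 ≤ #B ∧ ∀ j ∈ B, k j ≤ #B

variable {k : α → ℕ} {S T : Finset α} {𝓑 𝓑' : Finset (Finset α)}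

lemma IsBlockFamily.mono (h : IsBlockFamily k S 𝓑) (hST : S ⊆ T) : IsBlockFamily k T 𝓑 :=
  ⟨h.1, fun B hB => ⟨(h.2 B hB).1.trans hST, (h.2 B hB).2⟩⟩

lemma IsBlockFamily.subset (h : IsBlockFamily k S 𝓑) (h𝓑 : 𝓑' ⊆ 𝓑) : IsBlockFamily k S 𝓑' :=
  ⟨h.1.subset (coe_subset.2 h𝓑), fun B hB => h.2 B (h𝓑 hB)⟩

lemma IsBlockFamily.disjoint (h : IsBlockFamily k S 𝓑) (h' : IsBlockFamily k T 𝓑')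
    (hST : Disjoint S T) : Disjoint 𝓑 𝓑' := by
  refine disjoint_left.2 fun B hB hB' => ?_
  have hBB : Disjoint B B := hST.mono (h.2 B hB).1 (h'.2 B hB').1
  have hB₂ := (h.2 B hB).2.1
  rw [(disjoint_self_iff_empty B).1 hBB, card_empty] at hB₂
  omega

lemma IsBlockFamily.union [DecidableEq α] (h : IsBlockFamily k S 𝓑) (h' : IsBlockFamily k T 𝓑')
    (hST : Disjoint S T) : IsBlockFamily k (S ∪ T) (𝓑 ∪ 𝓑') := by
  refine ⟨?_, fun B hB => ?_⟩
  · rw [coe_union, Set.pairwiseDisjoint_union]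
    exact ⟨h.1, h'.1, fun B hB B' hB' _ => hST.mono (h.2 B hB).1 (h'.2 B' hB').1⟩
  · rcases mem_union.1 hB with hB | hB
    · exact ⟨(h.2 B hB).1.trans subset_union_left, (h.2 B hB).2⟩
    · exact ⟨(h'.2 B hB).1.trans subset_union_right, (h'.2 B hB).2⟩

lemma exists_isBlockFamily_card_eq_mul_add [DecidableEq α] (S : Finset α) {c : ℕ} (hc : 2 ≤ c) :
    ∃ U ⊆ {j ∈ S | k j ≤ c}, ∃ 𝓒, IsBlockFamily k U 𝓒 ∧
      #{j ∈ S | k j ≤ c} = c * #𝓒 + #({j ∈ S | k j ≤ c} \ U) ∧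
      #({j ∈ S | k j ≤ c} \ U) < c ∧ ∑ C ∈ 𝓒, (1 / 2 : ℝ) ^ #C = #𝓒 * (1 / 2) ^ c := by
  obtain ⟨𝓒, h𝓒, hsub, hrest⟩ :=
    exists_pairwiseDisjoint_subsets_card_eq {j ∈ S | k j ≤ c} (by omega : 0 < c)
  have hU : 𝓒.biUnion id ⊆ {j ∈ S | k j ≤ c} := biUnion_subset.2 fun C hC => (hsub C hC).1
  refine ⟨_, hU, 𝓒, ⟨h𝓒, fun C hC => ⟨subset_biUnion_of_mem id hC, ?_, fun j hj => ?_⟩⟩, ?_,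
    hrest, ?_⟩
  · rw [(hsub C hC).2]; exact hc
  · rw [(hsub C hC).2]; exact (mem_filter.1 ((hsub C hC).1 hj)).2
  · rw [← card_sdiff_add_card_eq_card hU, card_biUnion h𝓒,
      sum_const_nat (f := fun C => #(id C)) fun C hC => (hsub C hC).2, add_comm, mul_comm]
  · rw [sum_congr rfl fun C hC => by rw [(hsub C hC).2], sum_const, nsmul_eq_mul]

lemma influence_tribes_lt {n : ℕ} {k : Fin n → ℕ} {𝓑 : Finset (Finset (Fin n))}
    (h𝓑 : IsBlockFamily k univ 𝓑) {j : Fin n} {a : ℝ} (ha : 0 < a)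
    (hka : (1 / 2 : ℝ) ^ (k j - 1) < a) : influence n (tribes 𝓑) j < a := by
  by_cases hj : ∃ B ∈ 𝓑, j ∈ B
  · obtain ⟨B, hB, hjB⟩ := hj
    calc influence n (tribes 𝓑) j ≤ (1 / 2) ^ (#B - 1) := influence_tribes_le h𝓑.1 hB hjB
      _ ≤ (1 / 2) ^ (k j - 1) := pow_le_pow_of_le_one (by norm_num) (by norm_num)
          (Nat.sub_le_sub_right ((h𝓑.2 B hB).2.2 j hjB) 1)
      _ < a := hka
  · rw [influence_tribes_of_forall_notMem fun B hB hjB => hj ⟨B, hB, hjB⟩]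
    exact ha

end Blocks

section Carry

variable {α : Type*} {k : α → ℕ}

/-- What the greedy construction may lose from block size `c` on: at most `c - 1` members left
over at size `c`, then one more at each larger size. -/
noncomputable def carryError (N c : ℕ) : ℝ :=
  (c - 1) * blockWeight c + ∑ i ∈ range (N + 1 - c), blockWeight (c + 1 + i)

lemma carryError_eq_add {N c : ℕ} (hcN : c ≤ N) :
    carryError N c = (c - 1) * (blockWeight c - blockWeight (c + 1)) + carryError N (c + 1) := by
  rw [carryError, carryError, show N + 1 - c = N + 1 - (c + 1) + 1 by omega, sum_range_succ']
  push_cast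
  ring_nf

lemma carryError_two_le (N : ℕ) : carryError N 2 ≤ Real.log 2 / 4 :=
  calc carryError N 2 = ∑ m ∈ range (N + 1 - 2 + 1), blockWeight (2 + m) := by
        rw [carryError, sum_range_succ']
        push_cast
        ring_nf
    _ ≤ Real.log 2 / 4 := sum_range_blockWeight_le _

lemma sub_carryError_le_sub_carryError {N c q r : ℕ} (hc : 2 ≤ c) (hcN : c ≤ N) (hr : r < c) :
    (c * q + r) * blockWeight c - carryError N c ≤
      q * (1 / 2 : ℝ) ^ c + r * blockWeight (c + 1) - carryError N (c + 1) := by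
  have hr' : (r : ℝ) ≤ c - 1 := by
    have : (r : ℝ) + 1 ≤ c := by exact_mod_cast hr
    linarith
  have hdiff : 0 ≤ blockWeight c - blockWeight (c + 1) := sub_nonneg.2 (blockWeight_succ_le hc)
  rw [carryError_eq_add hcN]
  nlinarith [mul_le_mul_of_nonneg_left (natCast_mul_blockWeight_le hc) (Nat.cast_nonneg' q),
    mul_le_mul_of_nonneg_right hr' hdiff]

lemma sum_blockWeight_max_eq (S : Finset α) {c d : ℕ} (hcd : c ≤ d) (hdc : d ≤ c + 1) :
    ∑ j ∈ S, blockWeight (max d (k j)) =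
      #{j ∈ S | k j ≤ c} * blockWeight d + ∑ j ∈ S with c < k j, blockWeight (k j) := by
  rw [← sum_filter_add_sum_filter_not S (fun j => k j ≤ c)]
  congr 1
  · rw [sum_congr rfl fun j hj => by rw [max_eq_left ((mem_filter.1 hj).2.trans hcd)],
      sum_const, nsmul_eq_mul]
  · refine sum_congr (filter_congr fun j _ => not_le) fun j hj => ?_
    have := (mem_filter.1 hj).2
    rw [max_eq_right (by omega)]

lemma sum_blockWeight_max_le_carryError (N : ℕ) {c : ℕ} (hc : 1 ≤ c) {S : Finset α}
    (hk : ∀ j ∈ S, k j ≤ c) (hS : #S < c) :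
    ∑ j ∈ S, blockWeight (max c (k j)) ≤ carryError N c := by
  have hS' : (#S : ℝ) ≤ c - 1 := by
    have : (#S : ℝ) + 1 ≤ c := by exact_mod_cast hS
    linarith
  rw [sum_congr rfl fun j hj => by rw [max_eq_left (hk j hj)], sum_const, nsmul_eq_mul, carryError]
  have := sum_nonneg fun i (_ : i ∈ range (N + 1 - c)) =>
    blockWeight_nonneg (c := c + 1 + i) (by omega)
  nlinarith [blockWeight_nonneg hc]

end Carry

section Greedy

variable {α : Type*} [DecidableEq α] {k : α → ℕ}

/-- Members with `k j < c` are leftovers from smaller block sizes and are charged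
`blockWeight c`. At size `c`, the members with `k j ≤ c` are cut into blocks of size `c` and the
fewer than `c` leftovers move on to size `c + 1`. -/
theorem exists_isBlockFamily_sub_carryError_le {N : ℕ} (hN : ∀ j, k j ≤ N) (c : ℕ) (hc : 2 ≤ c)
    (S : Finset α) (hS : #{j ∈ S | k j < c} < c) :
    ∃ 𝓑, IsBlockFamily k S 𝓑 ∧
      ∑ j ∈ S, blockWeight (max c (k j)) - carryError N c ≤ ∑ B ∈ 𝓑, (1 / 2 : ℝ) ^ #B := by
  by_cases hcN : N < c
  · have hlt : ∀ j, k j < c := fun j => (hN j).trans_lt hcN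
    rw [filter_true_of_mem fun j _ => hlt j] at hS
    refine ⟨∅, ⟨by simp, by simp⟩, ?_⟩
    simpa using sum_blockWeight_max_le_carryError N (by omega) (fun j _ => (hlt j).le) hS
  rw [not_lt] at hcN
  obtain ⟨U, hU, 𝓒, h𝓒, hcard, hrest, hsum𝓒⟩ := exists_isBlockFamily_card_eq_mul_add (k := k) S hc
  have hsmall : {j ∈ S \ U | k j ≤ c} = {j ∈ S | k j ≤ c} \ U := by
    ext j; simp only [mem_filter, mem_sdiff]; tauto
  have hlarge : {j ∈ S \ U | c < k j} = {j ∈ S | c < k j} := by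
    ext j
    simp only [mem_filter, mem_sdiff]
    refine ⟨fun h => ⟨h.1.1, h.2⟩, fun h => ⟨⟨h.1, fun hjU => ?_⟩, h.2⟩⟩
    exact (mem_filter.1 (hU hjU)).2.not_gt h.2
  obtain ⟨𝓑, h𝓑, hsum𝓑⟩ := exists_isBlockFamily_sub_carryError_le hN (c + 1) (by omega) (S \ U)
    (by simpa only [Nat.lt_succ_iff, hsmall] using hrest.trans (Nat.lt_succ_self c))
  have hUS : U ⊆ S := hU.trans (filter_subset _ S)
  refine ⟨𝓒 ∪ 𝓑, (h𝓒.union h𝓑 disjoint_sdiff).mono (union_sdiff_of_subset hUS).le, ?_⟩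
  rw [sum_blockWeight_max_eq (S \ U) c.le_succ le_rfl, hsmall, hlarge] at hsum𝓑
  rw [sum_union (h𝓒.disjoint h𝓑 disjoint_sdiff), hsum𝓒, sum_blockWeight_max_eq S le_rfl c.le_succ,
    hcard]
  push_cast
  linarith [sub_carryError_le_sub_carryError hc hcN hrest (q := #𝓒)]
termination_by N + 1 - c

end Greedy

theorem exists_isBlockFamily_sum_ge {α : Type*} [Fintype α] [DecidableEq α] {k : α → ℕ}
    (hk : ∀ j, 2 ≤ k j) :
    ∃ 𝓑, IsBlockFamily k univ 𝓑 ∧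
      ∑ j, blockWeight (k j) - Real.log 2 / 4 ≤ ∑ B ∈ 𝓑, (1 / 2 : ℝ) ^ #B := by
  obtain ⟨𝓑, h𝓑, hsum⟩ := exists_isBlockFamily_sub_carryError_le (k := k)
    (fun j => le_sup (mem_univ j)) 2 le_rfl univ
    (by rw [filter_false_of_mem fun j _ => not_lt.2 (hk j), card_empty]; norm_num)
  simp only [max_eq_right (hk _)] at hsum
  exact ⟨𝓑, h𝓑, by linarith [carryError_two_le (univ.sup k)]⟩

theorem converse_talagrand_general (n : ℕ) (a : Fin n → ℝ)
    (ha : ∀ j, 0 < a j ∧ a j ≤ 1)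
    (α : ℝ) (hα : α = (∑ j, a j / (1 - Real.logb 2 (a j))) - 2 * Real.log 2)
    (μ : ℝ) (hμ0 : 0 < μ) (hμ1 : μ ≤ 1 - Real.exp (-α / 8)) :
    ∃ f : (Fin n → Bool) → Bool,
      μ ≤ expectation n f ∧
      expectation n f ≤ 3 / 4 * μ + 1 / 4 ∧
      ∀ j : Fin n, influence n f j < a j := by
  choose t ht using fun j =>
    exists_nat_pow_near_of_lt_one (ha j).1 (ha j).2 (by norm_num : (0 : ℝ) < 1 / 2) (by norm_num)
  obtain ⟨𝓑, h𝓑, hsum⟩ := exists_isBlockFamily_sum_ge (k := fun j => t j + 2) (fun j => by omega)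
  have hα𝓑 : α / 8 ≤ ∑ B ∈ 𝓑, (1 / 2 : ℝ) ^ #B := by
    have := sum_le_sum fun j (_ : j ∈ univ) => div_one_sub_logb_le_blockWeight (ha j).1 (ht j).2
    rw [← mul_sum] at this
    linarith
  have hprod : ∏ B ∈ 𝓑, (1 - (1 / 2 : ℝ) ^ #B) ≤ 1 - μ :=
    calc ∏ B ∈ 𝓑, (1 - (1 / 2 : ℝ) ^ #B) ≤ Real.exp (-∑ B ∈ 𝓑, (1 / 2 : ℝ) ^ #B) :=
          prod_one_sub_le_exp_neg_sum 𝓑 fun B _ => pow_le_one₀ (by norm_num) (by norm_num)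
      _ ≤ Real.exp (-α / 8) := Real.exp_le_exp.2 (by linarith)
      _ ≤ 1 - μ := by linarith
  have hfactor : ∀ B ∈ 𝓑, 3 / 4 ≤ 1 - (1 / 2 : ℝ) ^ #B := fun B hB => by
    linarith [pow_le_pow_of_le_one (by norm_num : (0 : ℝ) ≤ 1 / 2) (by norm_num) (h𝓑.2 B hB).2.1]
  obtain ⟨𝓟, h𝓟𝓑, hlow, hhigh⟩ :=
    exists_subset_prod_mem_Icc 𝓑 _ (by norm_num) (by norm_num) (by linarith) hfactor hprod
  have h𝓟 := h𝓑.subset h𝓟𝓑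
  refine ⟨tribes 𝓟, ?_, ?_, fun j => influence_tribes_lt h𝓟 (ha j).1 ?_⟩
  · rw [expectation_tribes h𝓟.1]; linarith
  · rw [expectation_tribes h𝓟.1]; linarith
  · simpa using (ht j).1

/-- **Converse of Talagrand's theorem.**
Given `0 < a_1, …, a_n ≤ 1` and `α = ∑_j a_j / (1 - log₂ a_j) - 2 ln 2`, for every
`0 < μ ≤ 1 - exp(-α/8)` there is a Boolean function `f` on `n` variables with
`μ ≤ E[f] ≤ (3/4)μ + 1/4` and `Inf_j[f] < a_j` for every `j`. -/
theorem converse_talagrand (n : ℕ) (hn : 1 ≤ n) (a : Fin n → ℝ)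
    (ha : ∀ j, 0 < a j ∧ a j ≤ 1)
    (α : ℝ) (hα : α = (∑ j, a j / (1 - Real.logb 2 (a j))) - 2 * Real.log 2)
    (μ : ℝ) (hμ0 : 0 < μ) (hμ1 : μ ≤ 1 - Real.exp (-α / 8)) :
    ∃ f : (Fin n → Bool) → Bool,
      μ ≤ expectation n f ∧
      expectation n f ≤ 3 / 4 * μ + 1 / 4 ∧
      ∀ j : Fin n, influence n f j < a j :=
  converse_talagrand_general n a ha α hα μ hμ0 hμ1
end

section
/- Let n be a positive integer and let 1 ≥ a_1 ≥ a_2 ≥ ⋯ ≥ a_n > 0 be a nonincreasing sequence of real numbers. Define s_0 = 0 and, recursively for i ≥ 1, k_i = min{ k ≥ 1 : s_{i-1} + k ≤ n and a_{s_{i-1}+k} > 2^{1−k} } and s_i = s_{i-1} + k_i, with m the largest index for which this minimum exists (i.e., the set {k ≥ 1 : s_m + k ≤ n and a_{s_m + k} > 2^{1−k}} is empty). Then ∑_{i=1}^{m} 2^{−k_i} ≥ ((∑_{j=1}^n a_j/(1 − log₂ a_j)) − 2·ln 2)/8. -/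
/-!
Write `f x = x / (1 - log₂ x)`. For `t ≥ 1`, `0 < x ≤ 2^(1-t)` gives `f x ≤ 2^(1-t) / t`.
By minimality of `k_{i+1}`, the `t`-th entry after `s_i` is at most `2^(1-t)` for `t < k_{i+1}`,
and by monotonicity every entry after `s_i` is at most `2^(1-p)`, where `p = k_i - 1` (and `p = 1`
for `i = 0`). So the part of the sum after `s_i` is at most a potential `W p`, which is `2 ln 2` for
`p = 1` (the series of `-2 ln (1 - 1/2)`) and `3 · 2^(-p)` for `p ≥ 2`. Passing a tribe of size
`k = q + 1` costs at most `W p - W q + 8 · 2^(-k)`. The one case where this estimate fails, a tribe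
of size `2` right after one of size at least `3`, cannot happen. Telescoping from `s_0 = 0` gives
the bound.
-/

open Finset Real

noncomputable def tribeBound (t : ℕ) : ℝ := (2 : ℝ) ^ (1 - (t : ℤ)) / t

noncomputable def tailBound (p : ℕ) : ℝ :=
  if p = 1 then 2 * log 2 else 3 / 2 * (2 : ℝ) ^ (1 - (p : ℤ))

lemma two_zpow_one_sub_natCast (t : ℕ) : (2 : ℝ) ^ (1 - (t : ℤ)) = 2 * (1 / 2) ^ t := by
  rw [zpow_sub₀ two_ne_zero, zpow_one, zpow_natCast, one_div_pow, div_eq_mul_one_div]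

lemma two_zpow_one_sub_le_of_le {t t' : ℕ} (h : t ≤ t') :
    (2 : ℝ) ^ (1 - (t' : ℤ)) ≤ 2 ^ (1 - (t : ℤ)) :=
  zpow_le_zpow_right₀ one_le_two (by omega)

lemma tribeBound_nonneg (t : ℕ) : 0 ≤ tribeBound t := by
  unfold tribeBound; positivity

lemma tribeBound_le_of_le {t t' : ℕ} (ht : 1 ≤ t) (h : t ≤ t') :
    tribeBound t' ≤ tribeBound t :=
  div_le_div₀ (by positivity) (two_zpow_one_sub_le_of_le h) (by exact_mod_cast ht)
    (by exact_mod_cast h)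

lemma natCast_mul_tribeBound {t : ℕ} (ht : 1 ≤ t) : t * tribeBound t = 2 ^ (1 - (t : ℤ)) := by
  have : (t : ℝ) ≠ 0 := by positivity
  unfold tribeBound; field_simp

lemma div_one_sub_logb_le_tribeBound {x : ℝ} {t : ℕ} (ht : 1 ≤ t) (hx : 0 < x)
    (hxt : x ≤ 2 ^ (1 - (t : ℤ))) : x / (1 - logb 2 x) ≤ tribeBound t := by
  have hlogb : logb 2 x ≤ 1 - t := by
    calc logb 2 x ≤ logb 2 (2 ^ (1 - (t : ℤ))) := logb_le_logb_of_le one_lt_two hx hxt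
      _ = 1 - t := by rw [← rpow_intCast, logb_rpow two_pos (by norm_num)]; push_cast; ring
  have ht : (1 : ℝ) ≤ t := by exact_mod_cast ht
  calc x / (1 - logb 2 x) ≤ x / t := div_le_div_of_nonneg_left hx.le (by linarith) (by linarith)
    _ ≤ tribeBound t := div_le_div_of_nonneg_right hxt (by linarith)

lemma div_one_sub_logb_le_tribeBound_max {x : ℝ} {t p : ℕ} (ht : 1 ≤ t) (hx : 0 < x)
    (hxt : x ≤ 2 ^ (1 - (t : ℤ))) (hxp : x ≤ 2 ^ (1 - (p : ℤ))) :
    x / (1 - logb 2 x) ≤ tribeBound (max t p) := by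
  rcases le_total t p with h | h
  · rw [max_eq_right h]; exact div_one_sub_logb_le_tribeBound (ht.trans h) hx hxp
  · rw [max_eq_left h]; exact div_one_sub_logb_le_tribeBound ht hx hxt

lemma sum_tribeBound_le (q : ℕ) : ∑ t ∈ Ioc 0 q, tribeBound t ≤ 2 * log 2 := by
  have hlog : HasSum (fun i : ℕ => (1 / 2 : ℝ) ^ (i + 1) / (i + 1)) (log 2) := by
    have h := hasSum_pow_div_log_of_abs_lt_one (x := (1 / 2 : ℝ)) (by norm_num [abs_of_pos])
    rwa [show (1 : ℝ) - 1 / 2 = 2⁻¹ by norm_num, log_inv, neg_neg] at h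
  have hshift : ∑ t ∈ Ioc 0 q, tribeBound t
      = 2 * ∑ i ∈ range q, (1 / 2 : ℝ) ^ (i + 1) / (i + 1) := by
    rw [← Ico_add_one_add_one_eq_Ioc, ← sum_Ico_add', Nat.Ico_zero_eq_range, mul_sum]
    refine sum_congr rfl fun i _ => ?_
    rw [tribeBound, two_zpow_one_sub_natCast]; push_cast; ring
  rw [hshift]
  gcongr
  exact sum_le_hasSum _ (fun i _ => by positivity) hlog

lemma sum_Ioc_two_zpow_one_sub_le (p r : ℕ) :
    ∑ t ∈ Ioc p r, (2 : ℝ) ^ (1 - (t : ℤ)) ≤ 2 ^ (1 - (p : ℤ)) := by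
  simp only [two_zpow_one_sub_natCast, ← mul_sum, ← Ico_add_one_add_one_eq_Ioc]
  have := geom_sum_Ico_le_of_lt_one (x := (1 / 2 : ℝ)) (m := p + 1) (n := r + 1)
    (by norm_num) (by norm_num)
  rw [pow_succ, mul_div_assoc, show (1 / 2 : ℝ) / (1 - 1 / 2) = 1 by norm_num, mul_one] at this
  linarith

lemma sum_tribeBound_max_le {p : ℕ} (hp : 1 ≤ p) (q : ℕ) :
    ∑ t ∈ Ioc 0 q, tribeBound (max t p) ≤ tailBound p := by
  rcases hp.eq_or_lt with rfl | hp
  · rw [tailBound, if_pos rfl]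
    refine le_of_eq_of_le (sum_congr rfl fun t ht => ?_) (sum_tribeBound_le q)
    rw [max_eq_left (mem_Ioc.1 ht).1]
  have hp' : (2 : ℝ) ≤ p := by exact_mod_cast hp
  have hhead : ∑ t ∈ Ioc 0 p, tribeBound (max t p) = 2 ^ (1 - (p : ℤ)) := by
    rw [sum_congr rfl fun t ht => by rw [max_eq_right (mem_Ioc.1 ht).2], sum_const,
      Nat.card_Ioc, nsmul_eq_mul, Nat.sub_zero, natCast_mul_tribeBound hp.le]
  have htail : ∑ t ∈ Ioc p (max q p), tribeBound (max t p) ≤ 2 ^ (1 - (p : ℤ)) / 2 :=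
    calc ∑ t ∈ Ioc p (max q p), tribeBound (max t p)
        ≤ ∑ t ∈ Ioc p (max q p), (2 : ℝ) ^ (1 - (t : ℤ)) / p := by
          refine sum_le_sum fun t ht => ?_
          rw [max_eq_left (mem_Ioc.1 ht).1.le, tribeBound]
          exact div_le_div_of_nonneg_left (by positivity) (by positivity)
            (by exact_mod_cast (mem_Ioc.1 ht).1.le)
      _ ≤ 2 ^ (1 - (p : ℤ)) / p := by
          rw [← sum_div]; gcongr; exact sum_Ioc_two_zpow_one_sub_le p _
      _ ≤ 2 ^ (1 - (p : ℤ)) / 2 := div_le_div_of_nonneg_left (by positivity) two_pos hp'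
  calc ∑ t ∈ Ioc 0 q, tribeBound (max t p)
      ≤ ∑ t ∈ Ioc 0 (max q p), tribeBound (max t p) :=
        sum_le_sum_of_subset_of_nonneg (Ioc_subset_Ioc_right (le_max_left q p))
          fun t _ _ => tribeBound_nonneg _
    _ ≤ tailBound p := by
        rw [← sum_Ioc_consecutive _ (Nat.zero_le p) (le_max_right q p), hhead, tailBound,
          if_neg (by omega)]
        linarith

lemma eight_mul_two_zpow_neg_succ (q : ℕ) :
    8 * (2 : ℝ) ^ (-((q + 1 : ℕ) : ℤ)) = 2 * 2 ^ (1 - (q : ℤ)) := by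
  rw [two_zpow_one_sub_natCast, zpow_neg, zpow_natCast, one_div, inv_pow]
  field_simp
  ring

lemma tribeBound_add_tailBound_le {q : ℕ} (hq : 2 ≤ q) :
    tribeBound q + tailBound q ≤ 8 * 2 ^ (-((q + 1 : ℕ) : ℤ)) := by
  have hq' : (2 : ℝ) ≤ q := by exact_mod_cast hq
  rw [eight_mul_two_zpow_neg_succ, tailBound, if_neg (by omega), tribeBound]
  have : (2 : ℝ) ^ (1 - (q : ℤ)) / q ≤ 2 ^ (1 - (q : ℤ)) / 2 :=
    div_le_div_of_nonneg_left (by positivity) two_pos hq'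
  linarith

lemma sum_tribeBound_max_add_tailBound_le {p q : ℕ} (hp : 1 ≤ p) (hq : 1 ≤ q)
    (hpq : 2 ≤ p → 2 ≤ q) :
    ∑ t ∈ Ioc 0 q, tribeBound (max t p) + tribeBound (max q p) + tailBound q
      ≤ tailBound p + 8 * 2 ^ (-((q + 1 : ℕ) : ℤ)) := by
  rcases hq.eq_or_lt with rfl | hq
  · obtain rfl : p = 1 := by omega
    norm_num [tribeBound, add_comm]
  have := sum_tribeBound_max_le hp q
  have := tribeBound_le_of_le hq.le (le_max_left q p)
  have := tribeBound_add_tailBound_le hq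
  linarith

lemma sum_Ioc_add_left_eq {M : Type*} [AddCommMonoid M] (g : ℕ → M) (c N : ℕ) :
    ∑ j ∈ Ioc c (c + N), g j = ∑ t ∈ Ioc 0 N, g (c + t) := by
  nth_rw 1 [← add_zero c, ← map_add_left_Ioc, sum_map]
  rfl

/-- Every entry after `s i` is at most `2 ^ (1 - tribeCap k i)`: for `i ≥ 1` the entry just before
`s i` failed the greedy test with `t = k i - 1`. -/
def tribeCap (k : ℕ → ℕ) : ℕ → ℕ
  | 0 => 1
  | i + 1 => k (i + 1) - 1

structure GreedyTribes (n : ℕ) (a : ℕ → ℝ) (m : ℕ) (k s : ℕ → ℕ) : Prop where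
  pos_le_one : ∀ j, 1 ≤ j → j ≤ n → 0 < a j ∧ a j ≤ 1
  antitoneOn : AntitoneOn a (Set.Icc 1 n)
  s_zero : s 0 = 0
  isLeast_k : ∀ i < m, IsLeast
    {t : ℕ | 1 ≤ t ∧ s i + t ≤ n ∧ (2 : ℝ) ^ (1 - (t : ℤ)) < a (s i + t)} (k (i + 1))
  s_succ : ∀ i < m, s (i + 1) = s i + k (i + 1)
  le_of_stopped : ∀ t, 1 ≤ t → s m + t ≤ n → a (s m + t) ≤ 2 ^ (1 - (t : ℤ))

namespace GreedyTribes

variable {n : ℕ} {a : ℕ → ℝ} {m : ℕ} {k s : ℕ → ℕ} {i : ℕ}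

lemma s_add_k_le (h : GreedyTribes n a m k s) (hi : i < m) : s i + k (i + 1) ≤ n :=
  (h.isLeast_k i hi).1.2.1

lemma s_le (h : GreedyTribes n a m k s) (hi : i ≤ m) : s i ≤ n := by
  cases i with
  | zero => simp [h.s_zero]
  | succ i => rw [h.s_succ i hi]; exact h.s_add_k_le hi

lemma two_le_k (h : GreedyTribes n a m k s) (hi : i < m) : 2 ≤ k (i + 1) := by
  obtain ⟨hk1, hkn, hlt⟩ := (h.isLeast_k i hi).1
  by_contra hk2
  obtain hk : k (i + 1) = 1 := by omega
  rw [hk] at hlt hkn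
  have := (h.pos_le_one _ (by omega) hkn).2
  norm_num at hlt
  linarith

lemma le_two_zpow_of_lt_k (h : GreedyTribes n a m k s) (hi : i < m) {t : ℕ} (ht : 1 ≤ t)
    (htk : t < k (i + 1)) : a (s i + t) ≤ 2 ^ (1 - (t : ℤ)) := by
  by_contra! hlt
  have := (h.isLeast_k i hi).2 ⟨ht, by have := h.s_add_k_le hi; omega, hlt⟩
  omega

lemma one_le_tribeCap (h : GreedyTribes n a m k s) (hi : i ≤ m) : 1 ≤ tribeCap k i := by
  cases i with
  | zero => rfl
  | succ i => have := h.two_le_k hi; simp only [tribeCap]; omega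

lemma le_two_zpow_tribeCap (h : GreedyTribes n a m k s) (hi : i ≤ m) {j : ℕ} (hj : s i < j)
    (hjn : j ≤ n) : a j ≤ 2 ^ (1 - (tribeCap k i : ℤ)) := by
  cases i with
  | zero => simpa [tribeCap] using (h.pos_le_one j (by omega) hjn).2
  | succ i =>
    have hk := h.two_le_k hi
    have hsi := h.s_succ i hi
    calc a j ≤ a (s i + (k (i + 1) - 1)) :=
          h.antitoneOn ⟨by omega, by omega⟩ ⟨by omega, hjn⟩ (by omega)
      _ ≤ 2 ^ (1 - (tribeCap k (i + 1) : ℤ)) := h.le_two_zpow_of_lt_k hi (by omega) (by omega)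

lemma two_le_tribeCap_succ (h : GreedyTribes n a m k s) (hi : i < m)
    (hp : 2 ≤ tribeCap k i) : 2 ≤ tribeCap k (i + 1) := by
  have hk := h.two_le_k hi
  by_contra hq
  obtain hk2 : k (i + 1) = 2 := by simp only [tribeCap] at hq; omega
  obtain ⟨-, hn, hlt⟩ := (h.isLeast_k i hi).1
  rw [hk2] at hn hlt
  have := h.le_two_zpow_tribeCap hi.le (j := s i + 2) (by omega) hn
  have := two_zpow_one_sub_le_of_le hp
  norm_num at hlt this
  linarith

lemma div_one_sub_logb_le (h : GreedyTribes n a m k s) (hi : i ≤ m) {t : ℕ} (ht : 1 ≤ t)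
    (htn : s i + t ≤ n) (hx : a (s i + t) ≤ 2 ^ (1 - (t : ℤ))) :
    a (s i + t) / (1 - logb 2 (a (s i + t))) ≤ tribeBound (max t (tribeCap k i)) :=
  div_one_sub_logb_le_tribeBound_max ht (h.pos_le_one _ (by omega) htn).1 hx
    (h.le_two_zpow_tribeCap hi (by omega) htn)

lemma sum_tribe_le (h : GreedyTribes n a m k s) (hi : i < m) :
    ∑ j ∈ Ioc (s i) (s (i + 1)), a j / (1 - logb 2 (a j))
      ≤ ∑ t ∈ Ioc 0 (tribeCap k (i + 1)), tribeBound (max t (tribeCap k i))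
        + tribeBound (max (tribeCap k (i + 1)) (tribeCap k i)) := by
  set q := tribeCap k (i + 1)
  have hk : k (i + 1) = q + 1 := by have := h.two_le_k hi; simp only [q, tribeCap]; omega
  have hn : s i + (q + 1) ≤ n := hk ▸ h.s_add_k_le hi
  rw [h.s_succ i hi, hk, sum_Ioc_add_left_eq, sum_Ioc_succ_top (Nat.zero_le q)]
  gcongr with t ht
  · obtain ⟨ht1, htq⟩ := mem_Ioc.1 ht
    exact h.div_one_sub_logb_le hi.le ht1 (by omega) (h.le_two_zpow_of_lt_k hi ht1 (by omega))
  · -- the last member of the tribe is dominated by the one before it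
    have hq : 1 ≤ q := by have := h.two_le_k hi; omega
    refine div_one_sub_logb_le_tribeBound_max hq (h.pos_le_one _ (by omega) hn).1 ?_
      (h.le_two_zpow_tribeCap hi.le (by omega) hn)
    calc a (s i + (q + 1)) ≤ a (s i + q) :=
          h.antitoneOn ⟨by omega, by omega⟩ ⟨by omega, hn⟩ (by omega)
      _ ≤ 2 ^ (1 - (q : ℤ)) := h.le_two_zpow_of_lt_k hi hq (by omega)

lemma sum_after_last_le (h : GreedyTribes n a m k s) :
    ∑ j ∈ Ioc (s m) n, a j / (1 - logb 2 (a j)) ≤ tailBound (tribeCap k m) := by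
  obtain ⟨N, hN⟩ := Nat.exists_eq_add_of_le (h.s_le le_rfl)
  rw [hN, sum_Ioc_add_left_eq]
  refine (sum_le_sum fun t ht => ?_).trans (sum_tribeBound_max_le (h.one_le_tribeCap le_rfl) N)
  obtain ⟨ht1, htN⟩ := mem_Ioc.1 ht
  exact h.div_one_sub_logb_le le_rfl ht1 (by omega) (h.le_of_stopped t ht1 (by omega))

lemma sum_after_le (h : GreedyTribes n a m k s) (hi : i ≤ m) :
    ∑ j ∈ Ioc (s i) n, a j / (1 - logb 2 (a j))
      ≤ tailBound (tribeCap k i) + 8 * ∑ l ∈ Ioc i m, (2 : ℝ) ^ (-(k l : ℤ)) := by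
  induction hi using Nat.decreasingInduction with
  | self => simpa using h.sum_after_last_le
  | of_succ i hi ih =>
    have hk : k (i + 1) = tribeCap k (i + 1) + 1 := by
      have := h.two_le_k hi; simp only [tribeCap]; omega
    have hstep := sum_tribeBound_max_add_tailBound_le (h.one_le_tribeCap hi.le)
      (h.one_le_tribeCap hi) (h.two_le_tribeCap_succ hi)
    rw [← sum_Ioc_consecutive _ (by rw [h.s_succ i hi]; omega) (h.s_le hi),
      ← sum_Ioc_consecutive _ (Nat.le_succ i) hi, Nat.Ioc_succ_singleton, sum_singleton, hk]
    have htribe := h.sum_tribe_le hi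
    simp only [Nat.succ_eq_add_one] at hstep ⊢
    linarith

end GreedyTribes

theorem tribe_sizes_sum_lower_bound_general (n : ℕ) (a : ℕ → ℝ)
    (ha : ∀ j, 1 ≤ j → j ≤ n → 0 < a j ∧ a j ≤ 1)
    (hmono : ∀ j, 1 ≤ j → j < n → a (j + 1) ≤ a j)
    (m : ℕ) (k s : ℕ → ℕ) (hs0 : s 0 = 0)
    (hk : ∀ i, 1 ≤ i → i ≤ m →
      IsLeast {t : ℕ | 1 ≤ t ∧ s (i - 1) + t ≤ n ∧
        (2 : ℝ) ^ (1 - (t : ℤ)) < a (s (i - 1) + t)} (k i))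
    (hs : ∀ i, 1 ≤ i → i ≤ m → s i = s (i - 1) + k i)
    (hm : ¬ ∃ t : ℕ, 1 ≤ t ∧ s m + t ≤ n ∧ (2 : ℝ) ^ (1 - (t : ℤ)) < a (s m + t)) :
    ∑ i ∈ Finset.Icc 1 m, (2 : ℝ) ^ (-(k i : ℤ)) ≥
      ((∑ j ∈ Finset.Icc 1 n, a j / (1 - Real.logb 2 (a j))) - 2 * Real.log 2) / 8 := by
  have h : GreedyTribes n a m k s :=
    { pos_le_one := ha
      antitoneOn := antitoneOn_of_succ_le Set.ordConnected_Icc fun j _ hj hj' => by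
        rw [Order.succ_eq_add_one] at hj' ⊢
        exact hmono j hj.1 (by simp only [Set.mem_Icc] at hj'; omega)
      s_zero := hs0
      isLeast_k := fun i hi => by simpa using hk (i + 1) (by omega) hi
      s_succ := fun i hi => by simpa using hs (i + 1) (by omega) hi
      le_of_stopped := fun t ht htn => not_lt.1 fun hlt => hm ⟨t, ht, htn, hlt⟩ }
  have hsum := h.sum_after_le (Nat.zero_le m)
  rw [hs0, ← Icc_add_one_left_eq_Ioc, ← Icc_add_one_left_eq_Ioc] at hsum
  rw [ge_iff_le, div_le_iff₀ (by norm_num)]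
  simp only [tribeCap, tailBound, if_true, zero_add] at hsum
  linarith

/-- **Claim (tribe sizes capture the Talagrand sum).**
Let `1 ≥ a_1 ≥ ⋯ ≥ a_n > 0`. With `s_0 = 0`,
`k_i = min{ k ≥ 1 : s_{i-1} + k ≤ n and a_{s_{i-1}+k} > 2^{1-k} }`, `s_i = s_{i-1} + k_i`,
and `m` the largest index for which this minimum exists, we have
`∑_{i=1}^m 2^{-k_i} ≥ ((∑_{j=1}^n a_j / (1 - log₂ a_j)) - 2 ln 2) / 8`. -/
theorem tribe_sizes_sum_lower_bound (n : ℕ) (hn : 1 ≤ n) (a : ℕ → ℝ)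
    (ha : ∀ j, 1 ≤ j → j ≤ n → 0 < a j ∧ a j ≤ 1)
    (hmono : ∀ j, 1 ≤ j → j < n → a (j + 1) ≤ a j)
    (m : ℕ) (k s : ℕ → ℕ) (hs0 : s 0 = 0)
    (hk : ∀ i, 1 ≤ i → i ≤ m →
      IsLeast {t : ℕ | 1 ≤ t ∧ s (i - 1) + t ≤ n ∧
        (2 : ℝ) ^ (1 - (t : ℤ)) < a (s (i - 1) + t)} (k i))
    (hs : ∀ i, 1 ≤ i → i ≤ m → s i = s (i - 1) + k i)
    (hm : ¬ ∃ t : ℕ, 1 ≤ t ∧ s m + t ≤ n ∧ (2 : ℝ) ^ (1 - (t : ℤ)) < a (s m + t)) :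
    ∑ i ∈ Finset.Icc 1 m, (2 : ℝ) ^ (-(k i : ℤ)) ≥
      ((∑ j ∈ Finset.Icc 1 n, a j / (1 - Real.logb 2 (a j))) - 2 * Real.log 2) / 8 :=
  tribe_sizes_sum_lower_bound_general n a ha hmono m k s hs0 hk hs hm
end

section
/- Let n be a positive integer and let 1 ≥ a_1 ≥ a_2 ≥ ⋯ ≥ a_n > 0 be a nonincreasing sequence of real numbers. Define s_0 = 0 and, recursively for i ≥ 1, k_i = min{ k ≥ 1 : s_{i-1} + k ≤ n and a_{s_{i-1}+k} > 2^{1−k} } and s_i = s_{i-1} + k_i, with m the largest index for which this minimum exists. Then 2 ≤ k_1 ≤ k_2 ≤ ⋯ ≤ k_m, i.e., the tribe sizes are nondecreasing and each is at least 2. -/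
/-!
Since `a ≤ 1 = 2 ^ (1 - 1)`, a tribe of size one is never admissible, so every `k_i ≥ 2`.
For monotonicity, the size `k_{i+1}` is admissible after `s_i`, and because `a` is nonincreasing
it stays admissible after the earlier position `s_{i-1}`: moving the start left only increases
`a (s + t)` and keeps `s + t ≤ n`. By minimality of `k_i`, `k_i ≤ k_{i+1}`.
-/

open Set

/-- The sizes `t` for which a tribe may occupy the positions `b + 1, …, b + t`. -/
def tribeSizes (a : ℕ → ℝ) (n b : ℕ) : Set ℕ :=
  {t | 1 ≤ t ∧ b + t ≤ n ∧ (2 : ℝ) ^ (1 - (t : ℤ)) < a (b + t)}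

variable {a : ℕ → ℝ} {n b k : ℕ}

lemma antitoneOn_Icc_of_succ_le (h : ∀ j, 1 ≤ j → j < n → a (j + 1) ≤ a j) :
    AntitoneOn a (Icc 1 n) :=
  antitoneOn_of_succ_le ordConnected_Icc fun j _ hj hj' ↦ by
    rw [Order.succ_eq_add_one] at hj' ⊢
    exact h j hj.1 (by simpa using hj'.2)

lemma one_notMem_tribeSizes (ha : ∀ j, 1 ≤ j → j ≤ n → a j ≤ 1) : 1 ∉ tribeSizes a n b := by
  rintro ⟨-, hle, hlt⟩
  norm_num at hlt
  exact (ha (b + 1) (by omega) hle).not_gt hlt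

lemma two_le_of_isLeast_tribeSizes (ha : ∀ j, 1 ≤ j → j ≤ n → a j ≤ 1)
    (hk : IsLeast (tribeSizes a n b) k) : 2 ≤ k := by
  have hk₁ : k ≠ 1 := fun h ↦ one_notMem_tribeSizes ha (h ▸ hk.1)
  have := hk.1.1
  omega

lemma tribeSizes_antitone (ha : AntitoneOn a (Icc 1 n)) {b' : ℕ} (hb : b ≤ b') :
    tribeSizes a n b' ⊆ tribeSizes a n b := by
  rintro t ⟨ht, hle, hlt⟩
  refine ⟨ht, by omega, hlt.trans_le ?_⟩
  exact ha ⟨by omega, by omega⟩ ⟨by omega, hle⟩ (by omega)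

theorem tribe_sizes_monotone_general (n : ℕ) (a : ℕ → ℝ)
    (ha : ∀ j, 1 ≤ j → j ≤ n → 0 < a j ∧ a j ≤ 1)
    (hmono : ∀ j, 1 ≤ j → j < n → a (j + 1) ≤ a j)
    (m : ℕ) (k s : ℕ → ℕ)
    (hk : ∀ i, 1 ≤ i → i ≤ m →
      IsLeast {t : ℕ | 1 ≤ t ∧ s (i - 1) + t ≤ n ∧
        (2 : ℝ) ^ (1 - (t : ℤ)) < a (s (i - 1) + t)} (k i))
    (hs : ∀ i, 1 ≤ i → i ≤ m → s i = s (i - 1) + k i) :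
    (∀ i, 1 ≤ i → i ≤ m → 2 ≤ k i) ∧
    (∀ i, 1 ≤ i → i + 1 ≤ m → k i ≤ k (i + 1)) := by
  have hk' : ∀ i, 1 ≤ i → i ≤ m → IsLeast (tribeSizes a n (s (i - 1))) (k i) := hk
  refine ⟨fun i hi him ↦ two_le_of_isLeast_tribeSizes (fun j hj hjn ↦ (ha j hj hjn).2)
    (hk' i hi him), fun i hi him ↦ (hk' i hi (by omega)).2 ?_⟩
  have hnext : k (i + 1) ∈ tribeSizes a n (s i) := by
    simpa using (hk' (i + 1) (by omega) him).1
  have hstart : s (i - 1) ≤ s i := by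
    rw [hs i hi (by omega)]
    exact Nat.le_add_right _ _
  exact tribeSizes_antitone (antitoneOn_Icc_of_succ_le hmono) hstart hnext

/-- **The greedy tribe sizes are nondecreasing and at least 2.**
Let `1 ≥ a_1 ≥ ⋯ ≥ a_n > 0`. With `s_0 = 0`,
`k_i = min{ k ≥ 1 : s_{i-1} + k ≤ n and a_{s_{i-1}+k} > 2^{1-k} }`, `s_i = s_{i-1} + k_i`,
and `m` the largest index for which this minimum exists, we have
`2 ≤ k_1 ≤ k_2 ≤ ⋯ ≤ k_m`. -/
theorem tribe_sizes_monotone (n : ℕ) (hn : 1 ≤ n) (a : ℕ → ℝ)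
    (ha : ∀ j, 1 ≤ j → j ≤ n → 0 < a j ∧ a j ≤ 1)
    (hmono : ∀ j, 1 ≤ j → j < n → a (j + 1) ≤ a j)
    (m : ℕ) (k s : ℕ → ℕ) (hs0 : s 0 = 0)
    (hk : ∀ i, 1 ≤ i → i ≤ m →
      IsLeast {t : ℕ | 1 ≤ t ∧ s (i - 1) + t ≤ n ∧
        (2 : ℝ) ^ (1 - (t : ℤ)) < a (s (i - 1) + t)} (k i))
    (hs : ∀ i, 1 ≤ i → i ≤ m → s i = s (i - 1) + k i)
    (hm : ¬ ∃ t : ℕ, 1 ≤ t ∧ s m + t ≤ n ∧ (2 : ℝ) ^ (1 - (t : ℤ)) < a (s m + t)) :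
    (∀ i, 1 ≤ i → i ≤ m → 2 ≤ k i) ∧
    (∀ i, 1 ≤ i → i + 1 ≤ m → k i ≤ k (i + 1)) :=
  tribe_sizes_monotone_general n a ha hmono m k s hk hs
end

section
/- Let k_1, ..., k_m be integers with k_i ≥ 2 for all i, and let 0 < μ ≤ 1 be a real number such that ∏_{i=1}^{m} (1 − 2^{−k_i}) ≤ 1 − μ. Let m_* = min{ 1 ≤ r ≤ m : ∏_{i=1}^{r} (1 − 2^{−k_i}) ≤ 1 − μ }. Then μ ≤ 1 − ∏_{i=1}^{m_*} (1 − 2^{−k_i}) < (3/4)·μ + 1/4. -/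
/-! Every factor `1 - 2^{-k_i}` is at least `3/4`. By minimality of `m_*`, the product over the
first `m_* - 1` tribes still exceeds `1 - μ` (for `m_* = 1` it is the empty product `1`, and
`μ > 0`), so appending the last factor keeps the product above `(3/4)(1 - μ)`. -/

open Finset

theorem three_quarters_le_one_sub_two_zpow_neg {n : ℕ} (hn : 2 ≤ n) :
    (3 / 4 : ℝ) ≤ 1 - 2 ^ (-(n : ℤ)) := by
  have h : (2 : ℝ) ^ (-(n : ℤ)) ≤ 2 ^ (-2 : ℤ) := zpow_le_zpow_right₀ (by norm_num) (by omega)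
  rw [show (2 : ℝ) ^ (-2 : ℤ) = 1 / 4 by norm_num] at h
  linarith

theorem prod_Icc_one_eq_prod_pred_mul {M : Type*} [CommMonoid M] (f : ℕ → M) {n : ℕ}
    (hn : 1 ≤ n) : ∏ i ∈ Icc 1 n, f i = (∏ i ∈ Icc 1 (n - 1), f i) * f n := by
  obtain ⟨n, rfl⟩ := Nat.exists_eq_add_of_le' hn
  exact prod_Icc_succ_top (by omega) f

theorem lt_prod_Icc_pred_of_isLeast {M : Type*} [CommMonoid M] [LinearOrder M]
    {f : ℕ → M} {c : M} {m n : ℕ} (hc : c < 1)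
    (hn : IsLeast {r : ℕ | 1 ≤ r ∧ r ≤ m ∧ ∏ i ∈ Icc 1 r, f i ≤ c} n) :
    c < ∏ i ∈ Icc 1 (n - 1), f i := by
  obtain ⟨⟨hone, hnm, -⟩, hmin⟩ := hn
  by_contra! hle
  rcases Nat.lt_or_ge n 2 with hlt | hge
  · obtain rfl : n = 1 := by omega
    simp only [Nat.sub_self, Icc_eq_empty_of_lt zero_lt_one, prod_empty] at hle
    exact hle.not_gt hc
  · have : n ≤ n - 1 := hmin ⟨by omega, by omega, hle⟩
    omega

theorem truncated_product_bounds_general (m : ℕ) (k : ℕ → ℕ)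
    (hk : ∀ i, 1 ≤ i → i ≤ m → 2 ≤ k i)
    (μ : ℝ) (hμ0 : 0 < μ)
    (mstar : ℕ)
    (hmstar : IsLeast {r : ℕ | 1 ≤ r ∧ r ≤ m ∧
      ∏ i ∈ Finset.Icc 1 r, (1 - (2 : ℝ) ^ (-(k i : ℤ))) ≤ 1 - μ} mstar) :
    μ ≤ 1 - ∏ i ∈ Finset.Icc 1 mstar, (1 - (2 : ℝ) ^ (-(k i : ℤ))) ∧
    1 - ∏ i ∈ Finset.Icc 1 mstar, (1 - (2 : ℝ) ^ (-(k i : ℤ))) < 3 / 4 * μ + 1 / 4 := by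
  obtain ⟨hone, hle_m, hle⟩ := hmstar.1
  have hfac : ∀ i, 1 ≤ i → i ≤ m → (3 / 4 : ℝ) ≤ 1 - 2 ^ (-(k i : ℤ)) := fun i h1 h2 =>
    three_quarters_le_one_sub_two_zpow_neg (hk i h1 h2)
  have hprev := lt_prod_Icc_pred_of_isLeast (by linarith) hmstar
  have hprev_nonneg : 0 ≤ ∏ i ∈ Icc 1 (mstar - 1), (1 - (2 : ℝ) ^ (-(k i : ℤ))) :=
    prod_nonneg fun i hi => by
      rw [mem_Icc] at hi
      linarith [hfac i hi.1 (by omega)]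
  refine ⟨by linarith, ?_⟩
  rw [prod_Icc_one_eq_prod_pred_mul _ hone]
  nlinarith [hfac mstar hone hle_m]

/-- **The expectation of the truncated tribes product is close to `μ`.**
Let `k_1, …, k_m ≥ 2` be integers and `0 < μ ≤ 1` with `∏_{i=1}^m (1 - 2^{-k_i}) ≤ 1 - μ`.
If `m_*` is the least `1 ≤ r ≤ m` with `∏_{i=1}^r (1 - 2^{-k_i}) ≤ 1 - μ`, then
`μ ≤ 1 - ∏_{i=1}^{m_*} (1 - 2^{-k_i}) < (3/4)μ + 1/4`. -/
theorem truncated_product_bounds (m : ℕ) (k : ℕ → ℕ)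
    (hk : ∀ i, 1 ≤ i → i ≤ m → 2 ≤ k i)
    (μ : ℝ) (hμ0 : 0 < μ) (hμ1 : μ ≤ 1)
    (hprod : ∏ i ∈ Finset.Icc 1 m, (1 - (2 : ℝ) ^ (-(k i : ℤ))) ≤ 1 - μ)
    (mstar : ℕ)
    (hmstar : IsLeast {r : ℕ | 1 ≤ r ∧ r ≤ m ∧
      ∏ i ∈ Finset.Icc 1 r, (1 - (2 : ℝ) ^ (-(k i : ℤ))) ≤ 1 - μ} mstar) :
    μ ≤ 1 - ∏ i ∈ Finset.Icc 1 mstar, (1 - (2 : ℝ) ^ (-(k i : ℤ))) ∧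
    1 - ∏ i ∈ Finset.Icc 1 mstar, (1 - (2 : ℝ) ^ (-(k i : ℤ))) < 3 / 4 * μ + 1 / 4 :=
  truncated_product_bounds_general m k hk μ hμ0 mstar hmstar
end
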